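/- For every d ∈ ℕ_+ and t ∈ ℕ, the curve γ_{t,d}: [0,1] → (S^1)^d ⊂ ℝ^{2d}, γ_{t,d}(s) = (e^{2πi(t+1)^{d-1}s}, e^{2πi(t+1)^{d-2}s}, ..., e^{2πis}) (each circle factor embedded as (cos, sin) in ℝ^2), is a t-design curve on the d-torus, with length ℓ(γ_{t,d}) = 2π√(Σ_{j=0}^{d-1} (t+1)^{2j}), and this satisfies ℓ(γ_{t,d}) ≤ 2π√(Σ_{j=0}^{d-1} 4^j) · t^{d-1} for t ≥ 1. -/

import Mathlib

open Real MvPolynomial MeasureTheory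

/-- The curve `γ_{t,d}(s) = (e^{2πi(t+1)^{d-1}s}, ..., e^{2πis})` on the `d`-torus
`(S¹)^d ⊂ ℝ^{2d}`, each circle factor embedded as `(cos, sin)`. -/
noncomputable def torusCurveD (t d : ℕ) (s : ℝ) : EuclideanSpace ℝ (Fin d × Fin 2) :=
  (WithLp.equiv 2 (Fin d × Fin 2 → ℝ)).symm fun p =>
    ![Real.cos (2 * π * ((t + 1 : ℝ) ^ (d - 1 - (p.1 : ℕ))) * s),
      Real.sin (2 * π * ((t + 1 : ℝ) ^ (d - 1 - (p.1 : ℕ))) * s)] p.2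

/-- A point of the `d`-torus `(S¹)^d ⊂ ℝ^{2d}` given by angles `θ`. -/
noncomputable def torusPoint (d : ℕ) (θ : Fin d → ℝ) : Fin d × Fin 2 → ℝ :=
  fun p => ![Real.cos (θ p.1), Real.sin (θ p.1)] p.2

/-!
On the torus a polynomial of degree `≤ t` in the coordinates `cos θᵢ, sin θᵢ` is a trigonometric
polynomial whose frequency vectors `m ∈ ℤᵈ` satisfy `∑ |mᵢ| ≤ t`. Along the winding line
`s ↦ 2πs·w` with `wᵢ = (t+1)^(d-1-i)`, the character `e^{i⟨m, θ⟩}` has average `[⟨m, w⟩ = 0]` over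
`[0, 1]`, while its average over the torus is `[m = 0]`. These agree: `⟨m, w⟩` is an integer
written in base `t + 1` with digits `mᵢ` of absolute value `≤ t`, so it vanishes only when every
digit does. The curve has constant speed `2π‖w‖`, so its normalized line integral is the plain
average over `[0, 1]` and its length is `2π‖w‖`.
-/

open Complex in
lemma integral_exp_int_mul_I (k : ℤ) :
    ∫ x in (0:ℝ)..2 * π, exp (k * x * I) = if k = 0 then (2 * π : ℂ) else 0 := by
  split_ifs with hk
  · simp [hk]
  · have hkI : (k * I : ℂ) ≠ 0 := by simp [hk]
    have hperiod : exp (k * I * (2 * π)) = 1 := by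
      rw [show (k * I * (2 * π) : ℂ) = k * (2 * π * I) by ring]
      exact exp_int_mul_two_pi_mul_I k
    simp_rw [mul_right_comm _ _ I]
    simp [integral_exp_mul_complex hkI, hperiod]

open Complex in
noncomputable def torusChar {d : ℕ} (m : Fin d → ℤ) (θ : Fin d → ℝ) : ℂ :=
  ∏ i, exp (m i * θ i * I)

section torusChar
variable {d : ℕ}

lemma torusChar_add (m m' : Fin d → ℤ) : torusChar (m + m') = torusChar m * torusChar m' := by
  ext θ
  simp only [torusChar, Pi.mul_apply, ← Finset.prod_mul_distrib, ← Complex.exp_add, Pi.add_apply,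
    Int.cast_add, add_mul]

lemma torusChar_zero : torusChar (0 : Fin d → ℤ) = 1 := by
  ext θ
  simp [torusChar]

lemma torusChar_single_apply (i : Fin d) (k : ℤ) (θ : Fin d → ℝ) :
    torusChar (Pi.single i k) θ = Complex.exp (k * θ i * Complex.I) := by
  rw [torusChar, Finset.prod_eq_single i (fun j _ hj => by simp [hj]) (by simp)]
  simp

lemma continuous_torusChar (m : Fin d → ℤ) : Continuous (torusChar m) := by
  unfold torusChar
  fun_prop

lemma setIntegral_torusChar (m : Fin d → ℤ) :
    ∫ θ in Set.univ.pi fun _ : Fin d => Set.Ioc (0:ℝ) (2 * π), torusChar m θ =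
      if m = 0 then (2 * π : ℂ) ^ d else 0 := by
  unfold torusChar
  rw [volume_pi, Measure.restrict_pi_pi,
    integral_fintype_prod_eq_prod (fun i (x : ℝ) => Complex.exp (m i * x * Complex.I))]
  simp_rw [← intervalIntegral.integral_of_le two_pi_pos.le, integral_exp_int_mul_I]
  rw [Finset.prod_ite_zero, Finset.prod_const, Finset.card_univ, Fintype.card_fin]
  simp only [Finset.mem_univ, true_imp_iff, funext_iff, Pi.zero_apply]

lemma torusChar_line_apply (m w : Fin d → ℤ) (s : ℝ) :
    torusChar m (fun i => 2 * π * w i * s) =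
      Complex.exp ((∑ i, m i * w i : ℤ) * (2 * π * s : ℝ) * Complex.I) := by
  rw [torusChar, ← Complex.exp_sum]
  push_cast
  rw [Finset.sum_mul, Finset.sum_mul]
  exact congrArg _ (Finset.sum_congr rfl fun i _ => by ring)

lemma integral_torusChar_line (m w : Fin d → ℤ) :
    ∫ s in (0:ℝ)..1, torusChar m (fun i => 2 * π * w i * s) =
      if ∑ i, m i * w i = 0 then 1 else 0 := by
  simp_rw [torusChar_line_apply]
  rw [intervalIntegral.integral_comp_mul_left (fun x : ℝ => Complex.exp (_ * x * Complex.I))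
    two_pi_pos.ne', mul_zero, mul_one, integral_exp_int_mul_I]
  split_ifs
  · rw [Complex.real_smul]; push_cast; field_simp
  · simp

end torusChar

noncomputable def torusTrigPoly (d N : ℕ) : Submodule ℂ ((Fin d → ℝ) → ℂ) :=
  Submodule.span ℂ (torusChar '' {m | ∑ i, (m i).natAbs ≤ N})

namespace torusTrigPoly
variable {d : ℕ}

lemma mono {N M : ℕ} (h : N ≤ M) : torusTrigPoly d N ≤ torusTrigPoly d M :=
  Submodule.span_mono (Set.image_mono fun _ hm => le_trans hm h)

lemma mul_le (N M : ℕ) : torusTrigPoly d N * torusTrigPoly d M ≤ torusTrigPoly d (N + M) := by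
  rw [torusTrigPoly, torusTrigPoly, Submodule.span_mul_span]
  refine Submodule.span_mono ?_
  rintro _ ⟨_, ⟨m, hm, rfl⟩, _, ⟨m', hm', rfl⟩, rfl⟩
  refine ⟨m + m', ?_, torusChar_add m m'⟩
  calc ∑ i, (m i + m' i).natAbs ≤ ∑ i, ((m i).natAbs + (m' i).natAbs) :=
        Finset.sum_le_sum fun i _ => Int.natAbs_add_le _ _
    _ ≤ N + M := by rw [Finset.sum_add_distrib]; exact add_le_add hm hm'

lemma mul_mem {N M : ℕ} {g h : (Fin d → ℝ) → ℂ} (hg : g ∈ torusTrigPoly d N)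
    (hh : h ∈ torusTrigPoly d M) : g * h ∈ torusTrigPoly d (N + M) :=
  mul_le N M (Submodule.mul_mem_mul hg hh)

lemma one_mem : (1 : (Fin d → ℝ) → ℂ) ∈ torusTrigPoly d 0 :=
  Submodule.subset_span ⟨0, by simp, torusChar_zero⟩

lemma prod_mem {ι : Type*} (s : Finset ι) (g : ι → (Fin d → ℝ) → ℂ) (N : ι → ℕ)
    (hg : ∀ j ∈ s, g j ∈ torusTrigPoly d (N j)) :
    ∏ j ∈ s, g j ∈ torusTrigPoly d (∑ j ∈ s, N j) := by
  classical
  induction s using Finset.induction_on with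
  | empty => simpa using one_mem
  | insert j s hj ih =>
    rw [Finset.prod_insert hj, Finset.sum_insert hj]
    exact mul_mem (hg j (s.mem_insert_self j)) (ih fun k hk => hg k (Finset.mem_insert_of_mem hk))

lemma pow_mem {N : ℕ} {g : (Fin d → ℝ) → ℂ} (hg : g ∈ torusTrigPoly d N) (k : ℕ) :
    g ^ k ∈ torusTrigPoly d (k * N) := by
  simpa [Finset.prod_const, Finset.sum_const] using
    prod_mem (Finset.range k) (fun _ => g) (fun _ => N) fun _ _ => hg

lemma exp_mul_mem (i : Fin d) (k : ℤ) (hk : k.natAbs ≤ 1) :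
    (fun θ : Fin d → ℝ => Complex.exp (k * θ i * Complex.I)) ∈ torusTrigPoly d 1 := by
  refine Submodule.subset_span ⟨Pi.single i k, ?_, funext (torusChar_single_apply i k)⟩
  simpa [Pi.single_apply, apply_ite] using hk

lemma cos_mem (i : Fin d) : (fun θ : Fin d → ℝ => (Real.cos (θ i) : ℂ)) ∈ torusTrigPoly d 1 := by
  have h := Submodule.smul_mem _ (1 / 2 : ℂ)
    (Submodule.add_mem _ (exp_mul_mem i 1 le_rfl) (exp_mul_mem i (-1) le_rfl))
  convert h using 1
  ext θ
  simp [Complex.ofReal_cos, Complex.cos]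
  ring_nf

lemma sin_mem (i : Fin d) : (fun θ : Fin d → ℝ => (Real.sin (θ i) : ℂ)) ∈ torusTrigPoly d 1 := by
  have h := Submodule.smul_mem _ (Complex.I / 2)
    (Submodule.sub_mem _ (exp_mul_mem i (-1) le_rfl) (exp_mul_mem i 1 le_rfl))
  convert h using 1
  ext θ
  simp [Complex.ofReal_sin, Complex.sin]
  ring_nf

lemma coord_mem (p : Fin d × Fin 2) :
    (fun θ => (torusPoint d θ p : ℂ)) ∈ torusTrigPoly d 1 := by
  obtain ⟨i, j⟩ := p
  fin_cases j
  · exact cos_mem i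
  · exact sin_mem i

lemma eval_torusPoint_mem {N : ℕ} (f : MvPolynomial (Fin d × Fin 2) ℝ) (hf : f.totalDegree ≤ N) :
    (fun θ => (eval (torusPoint d θ) f : ℂ)) ∈ torusTrigPoly d N := by
  have hsum : (fun θ => (eval (torusPoint d θ) f : ℂ)) =
      ∑ k ∈ f.support, ((coeff k f : ℝ) : ℂ) • ∏ p, (fun θ => (torusPoint d θ p : ℂ)) ^ k p := by
    ext θ
    simp [eval_eq', Finset.sum_apply, Finset.prod_apply]
  rw [hsum]
  refine Submodule.sum_mem _ fun k hk => Submodule.smul_mem _ _ (mono ?_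
    (prod_mem _ _ _ fun p _ => pow_mem (coord_mem p) (k p)))
  simpa [Finsupp.sum_fintype] using (le_totalDegree hk).trans hf

lemma continuous_of_mem {N : ℕ} {g : (Fin d → ℝ) → ℂ} (hg : g ∈ torusTrigPoly d N) :
    Continuous g := by
  induction hg using Submodule.span_induction with
  | mem x hx => obtain ⟨m, -, rfl⟩ := hx; exact continuous_torusChar m
  | zero => exact continuous_const
  | add x y _ _ hx hy => exact hx.add hy
  | smul a x _ hx => exact hx.const_smul a

lemma integrableOn_box {N : ℕ} {g : (Fin d → ℝ) → ℂ} (hg : g ∈ torusTrigPoly d N) :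
    IntegrableOn g (Set.univ.pi fun _ : Fin d => Set.Ioc (0:ℝ) (2 * π)) :=
  ((continuous_of_mem hg).continuousOn.integrableOn_compact
    (isCompact_univ_pi fun _ => isCompact_Icc)).mono_set
    (Set.pi_mono fun _ _ => Set.Ioc_subset_Icc_self)

theorem integral_line_eq_average {N : ℕ} (w : Fin d → ℤ)
    (hw : ∀ m : Fin d → ℤ, ∑ i, (m i).natAbs ≤ N → ∑ i, m i * w i = 0 → m = 0)
    {g : (Fin d → ℝ) → ℂ} (hg : g ∈ torusTrigPoly d N) :
    ∫ s in (0:ℝ)..1, g (fun i => 2 * π * w i * s) =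
      ((2 * π : ℂ) ^ d)⁻¹ * ∫ θ in Set.univ.pi fun _ : Fin d => Set.Ioc (0:ℝ) (2 * π), g θ := by
  induction hg using Submodule.span_induction with
  | mem x hx =>
    obtain ⟨m, hm, rfl⟩ := hx
    rw [integral_torusChar_line, setIntegral_torusChar]
    by_cases h : m = 0
    · simp [h]
    · have hfreq : ∑ i, m i * w i ≠ 0 := fun h' => h (hw m hm h')
      simp [h, hfreq]
  | zero => simp
  | add x y hx hy ihx ihy =>
    have hline : ∀ {g}, g ∈ torusTrigPoly d N →
        IntervalIntegrable (fun s : ℝ => g (fun i => 2 * π * w i * s)) volume 0 1 :=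
      fun hg => ((continuous_of_mem hg).comp (by fun_prop)).intervalIntegrable _ _
    simp only [Pi.add_apply]
    rw [intervalIntegral.integral_add (hline hx) (hline hy), integral_add (integrableOn_box hx)
      (integrableOn_box hy), mul_add, ihx, ihy]
  | smul a x _ ih =>
    simp only [Pi.smul_apply, smul_eq_mul, intervalIntegral.integral_const_mul, integral_const_mul,
      ih]
    ring

end torusTrigPoly

lemma Int.eq_zero_of_sum_mul_pow_eq_zero {n : ℕ} {b : ℤ} {m : Fin n → ℤ} (hm : ∀ i, |m i| < b)
    (h : ∑ i, m i * b ^ (i : ℕ) = 0) : m = 0 := by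
  induction n with
  | zero => exact Subsingleton.elim _ _
  | succ n ih =>
    set T := ∑ i : Fin n, m i.succ * b ^ (i : ℕ)
    have hsplit : m 0 + T * b = 0 := by
      rw [← h, Fin.sum_univ_succ, Finset.sum_mul]
      simp [pow_succ, mul_assoc]
    have hb : b ≠ 0 := (abs_nonneg _).trans_lt (hm 0) |>.ne'
    have h0 : m 0 = 0 := Int.eq_zero_of_abs_lt_dvd ⟨-T, by linarith⟩ (hm 0)
    have htail : (fun i : Fin n => m i.succ) = 0 :=
      ih (fun i => hm i.succ) (by simpa [h0, hb] using hsplit)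
    ext i
    exact Fin.cases h0 (fun i => congrFun htail i) i

def torusFreq (t d : ℕ) (i : Fin d) : ℤ := (t + 1) ^ (d - 1 - (i : ℕ))

lemma eq_zero_of_sum_mul_torusFreq_eq_zero (t d : ℕ) (m : Fin d → ℤ)
    (hm : ∑ i, (m i).natAbs ≤ t) (h : ∑ i, m i * torusFreq t d i = 0) : m = 0 := by
  have hdigit : ∀ i, |m i| < t + 1 := fun i => by
    have hi : (m i).natAbs ≤ t :=
      (Finset.single_le_sum (fun j _ => Nat.zero_le _) (Finset.mem_univ i)).trans hm
    rw [Int.abs_eq_natAbs]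
    omega
  have hrev : m ∘ Fin.rev = 0 := by
    refine Int.eq_zero_of_sum_mul_pow_eq_zero (fun i => hdigit _) ?_
    rw [← h, ← Equiv.sum_comp Fin.revPerm]
    refine Finset.sum_congr rfl fun i _ => ?_
    simp only [Function.comp_apply, Fin.revPerm_apply, torusFreq, Fin.rev_rev, Fin.val_rev]
    congr 2
    omega
  ext i
  simpa using congrFun hrev i.rev

lemma equiv_torusCurveD (t d : ℕ) (s : ℝ) :
    WithLp.equiv 2 (Fin d × Fin 2 → ℝ) (torusCurveD t d s) =
      torusPoint d (fun i => 2 * π * torusFreq t d i * s) := by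
  ext p
  simp [torusCurveD, torusPoint, torusFreq]

theorem integral_torusCurveD_eq_average (t d : ℕ) (f : MvPolynomial (Fin d × Fin 2) ℝ)
    (hf : f.totalDegree ≤ t) :
    ∫ s in (0:ℝ)..1, eval (WithLp.equiv 2 (Fin d × Fin 2 → ℝ) (torusCurveD t d s)) f =
      1 / (2 * π) ^ d *
        ∫ θ in Set.univ.pi fun _ : Fin d => Set.Ioc (0:ℝ) (2 * π), eval (torusPoint d θ) f := by
  apply Complex.ofReal_injective
  push_cast
  rw [← intervalIntegral.integral_ofReal, ← integral_complex_ofReal, one_div]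
  simp_rw [equiv_torusCurveD]
  exact torusTrigPoly.integral_line_eq_average _ (eq_zero_of_sum_mul_torusFreq_eq_zero t d)
    (torusTrigPoly.eval_torusPoint_mem f hf)

-- `(-sin x, cos x) = (cos (x + π/2), sin (x + π/2))`: each circle factor moves at a right angle
-- to its position.
lemma hasDerivAt_torusPoint_line {d : ℕ} (c : Fin d → ℝ) (s : ℝ) :
    HasDerivAt (fun s => WithLp.toLp 2 (torusPoint d fun i => c i * s))
      (WithLp.toLp 2 fun p => c p.1 * torusPoint d (fun i => c i * s + π / 2) p) s := by
  have hcoord : HasDerivAt (fun s => torusPoint d fun i => c i * s)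
      (fun p => c p.1 * torusPoint d (fun i => c i * s + π / 2) p) s := by
    refine hasDerivAt_pi.2 fun ⟨i, j⟩ => ?_
    have hlin : HasDerivAt (fun s => c i * s) (c i) s := by
      simpa using (hasDerivAt_id s).const_mul (c i)
    fin_cases j
    · simpa [torusPoint, Real.cos_add_pi_div_two, mul_comm] using hlin.cos
    · simpa [torusPoint, Real.sin_add_pi_div_two, mul_comm] using hlin.sin
  exact (PiLp.hasFDerivAt_toLp 2 _).comp_hasDerivAt s hcoord

lemma norm_toLp_mul_torusPoint {d : ℕ} (c θ : Fin d → ℝ) :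
    ‖WithLp.toLp 2 fun p : Fin d × Fin 2 => c p.1 * torusPoint d θ p‖ = √(∑ i, c i ^ 2) := by
  rw [EuclideanSpace.norm_eq]
  congr 1
  refine (Fintype.sum_prod_type _).trans (Finset.sum_congr rfl fun i _ => ?_)
  simp only [Fin.sum_univ_two, torusPoint, Real.norm_eq_abs, sq_abs]
  simp only [Matrix.cons_val_zero, Matrix.cons_val_one, mul_pow]
  rw [← mul_add, Real.cos_sq_add_sin_sq, mul_one]

lemma norm_deriv_torusCurveD (t d : ℕ) (s : ℝ) :
    ‖deriv (torusCurveD t d) s‖ = 2 * π * √(∑ j ∈ Finset.range d, (t + 1 : ℝ) ^ (2 * j)) := by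
  set c : Fin d → ℝ := fun i => 2 * π * (t + 1 : ℝ) ^ (d - 1 - (i : ℕ))
  have hcurve : torusCurveD t d = fun s => WithLp.toLp 2 (torusPoint d fun i => c i * s) := rfl
  rw [hcurve, (hasDerivAt_torusPoint_line c s).deriv, norm_toLp_mul_torusPoint]
  have hsum : ∑ i, c i ^ 2 = (2 * π) ^ 2 * ∑ j ∈ Finset.range d, (t + 1 : ℝ) ^ (2 * j) := by
    rw [← Finset.sum_range_reflect, Finset.mul_sum,
      ← Fin.sum_univ_eq_sum_range (fun i => (2 * π) ^ 2 * (t + 1 : ℝ) ^ (2 * (d - 1 - i)))]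
    simp only [c, mul_pow, pow_mul']
  rw [hsum, Real.sqrt_mul (by positivity), Real.sqrt_sq two_pi_pos.le]

lemma sum_add_one_pow_two_mul_le {x : ℝ} (hx : 1 ≤ x) (d : ℕ) :
    ∑ j ∈ Finset.range d, (x + 1) ^ (2 * j) ≤
      (∑ j ∈ Finset.range d, (4 : ℝ) ^ j) * (x ^ (d - 1)) ^ 2 := by
  rw [Finset.sum_mul]
  refine Finset.sum_le_sum fun j hj => ?_
  have hjd : j ≤ d - 1 := by have := Finset.mem_range.1 hj; omega
  calc (x + 1) ^ (2 * j) = ((x + 1) ^ 2) ^ j := pow_mul _ _ _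
    _ ≤ (4 * x ^ 2) ^ j := pow_le_pow_left₀ (by positivity) (by nlinarith) j
    _ = 4 ^ j * (x ^ j) ^ 2 := by ring
    _ ≤ 4 ^ j * (x ^ (d - 1)) ^ 2 := by gcongr

lemma two_pi_mul_sqrt_sum_le {t : ℕ} (ht : 1 ≤ t) (d : ℕ) :
    2 * π * √(∑ j ∈ Finset.range d, (t + 1 : ℝ) ^ (2 * j)) ≤
      2 * π * √(∑ j ∈ Finset.range d, (4 : ℝ) ^ j) * (t : ℝ) ^ (d - 1) :=
  calc 2 * π * √(∑ j ∈ Finset.range d, (t + 1 : ℝ) ^ (2 * j))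
      ≤ 2 * π * √((∑ j ∈ Finset.range d, (4 : ℝ) ^ j) * ((t : ℝ) ^ (d - 1)) ^ 2) := by
        gcongr; exact sum_add_one_pow_two_mul_le (by exact_mod_cast ht) d
    _ = 2 * π * √(∑ j ∈ Finset.range d, (4 : ℝ) ^ j) * (t : ℝ) ^ (d - 1) := by
        rw [Real.sqrt_mul (by positivity), Real.sqrt_sq (by positivity), ← mul_assoc]

/-- for every `d ≥ 1` and `t`, the curve `γ_{t,d}` is a `t`-design curve on
the `d`-torus, with length `2π√(Σ_{j<d} (t+1)^{2j})`, which for `t ≥ 1` is at most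
`2π√(Σ_{j<d} 4^j)·t^{d-1}`. -/
theorem torusCurveD_is_design (d t : ℕ) (hd : 0 < d) :
    (∀ f : MvPolynomial (Fin d × Fin 2) ℝ, f.totalDegree ≤ t →
      (∫ s in (0:ℝ)..1, ‖deriv (torusCurveD t d) s‖)⁻¹ *
          ∫ s in (0:ℝ)..1,
            eval (WithLp.equiv 2 (Fin d × Fin 2 → ℝ) (torusCurveD t d s)) f *
            ‖deriv (torusCurveD t d) s‖ =
        (1 / (2 * π) ^ d) *
          ∫ θ in Set.univ.pi fun _ : Fin d => Set.Ioc (0:ℝ) (2 * π),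
            eval (torusPoint d θ) f) ∧
    (∫ s in (0:ℝ)..1, ‖deriv (torusCurveD t d) s‖) =
      2 * π * Real.sqrt (∑ j ∈ Finset.range d, (t + 1 : ℝ) ^ (2 * j)) ∧
    (1 ≤ t →
      (∫ s in (0:ℝ)..1, ‖deriv (torusCurveD t d) s‖) ≤
        2 * π * Real.sqrt (∑ j ∈ Finset.range d, (4 : ℝ) ^ j) * (t : ℝ) ^ (d - 1)) := by
  set L := 2 * π * √(∑ j ∈ Finset.range d, (t + 1 : ℝ) ^ (2 * j))
  have hlen : ∫ s in (0:ℝ)..1, ‖deriv (torusCurveD t d) s‖ = L := by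
    simp [norm_deriv_torusCurveD, L]
  have hL : L ≠ 0 := by
    have : 0 < ∑ j ∈ Finset.range d, (t + 1 : ℝ) ^ (2 * j) :=
      Finset.sum_pos (fun j _ => by positivity) (Finset.nonempty_range_iff.2 hd.ne')
    positivity
  refine ⟨fun f hf => ?_, hlen, fun ht => hlen ▸ two_pi_mul_sqrt_sum_le ht d⟩
  rw [hlen]
  simp_rw [norm_deriv_torusCurveD]
  rw [intervalIntegral.integral_mul_const, mul_comm (∫ _ in (0:ℝ)..1, _), inv_mul_cancel_left₀ hL]
  exact integral_torusCurveD_eq_average t d f hf
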